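/- arXiv:1302.3315 — 4 statements merged into one kernel-verified Lean document; each statement's English description precedes it below -/
import Mathlib

section
/- Let n be a natural number and let A, 𝔚, R, M : ℝ → Matrix (Fin n) (Fin n) ℝ be such that A is twice differentiable with A(t) invertible for every t, 𝔚 is differentiable with 𝔚(t) skew-symmetric (𝔚(t)ᵀ = −𝔚(t)) for every t, and A″(t) + 2A′(t)·𝔚(t) + A(t)·𝔚′(t) + A(t)·𝔚(t)² + A(t)·(R(t) − M(t)) = 0 for every t. Define N(t) = A(t)⁻¹·A′(t) + 𝔚(t). Then N is differentiable and satisfies the matrix Riccati equation N′(t) = −N(t)² − N(t)·𝔚(t) − 𝔚(t)ᵀ·N(t) − R(t) + M(t) for every t ∈ ℝ. -/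
/-!
With `B = A⁻¹`, differentiating `B A = 1` gives `B' = -B A' B`, so
`N' = -B A' B A' + B A'' + 𝔚'`. Substituting `A''` from the second-order equation and cancelling
`B A = 1` turns this into `-N² - N 𝔚 + 𝔚 N - R + M`, and skew-symmetry rewrites `𝔚 N` as
`-𝔚ᵀ N`.
-/

open Matrix

attribute [local instance] Matrix.normedAddCommGroup Matrix.normedSpace

theorem riccati_identity_of_mul_eq_one {α : Type*} [Ring α] {a a' a'' w w' r m b : α}
    (hba : b * a = 1)
    (hode : a'' + 2 • (a' * w) + a * w' + a * w ^ 2 + a * (r - m) = 0) :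
    -(b * a' * b) * a' + b * a'' + w' =
      -(b * a' + w) ^ 2 - (b * a' + w) * w + w * (b * a' + w) - r + m := by
  have ha'' : a'' = -(2 • (a' * w) + a * w' + a * w ^ 2 + a * (r - m)) := by
    rw [← sub_eq_zero, sub_neg_eq_add, ← hode]
    abel
  simp only [ha'', mul_neg, mul_add, mul_smul_comm, ← mul_assoc, hba, one_mul]
  noncomm_ring

section NormedAlgebra

variable {𝔸 : Type*} [NormedRing 𝔸] [NormedAlgebra ℝ 𝔸] [HasSummableGeomSeries 𝔸]

theorem HasDerivAt.ringInverse {a : ℝ → 𝔸} {a' : 𝔸} {t : ℝ} (ha : HasDerivAt a a' t)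
    (hu : IsUnit (a t)) :
    HasDerivAt (fun s => Ring.inverse (a s))
      (-(Ring.inverse (a t) * a' * Ring.inverse (a t))) t := by
  obtain ⟨u, hu⟩ := hu
  have hinv := hasFDerivAt_ringInverse (𝕜 := ℝ) u
  rw [hu] at hinv
  simpa [← hu, Function.comp_def] using hinv.comp_hasDerivAt t ha

theorem HasDerivAt.riccati_of_second_order {a a' w : ℝ → 𝔸} {a'' w' r m : 𝔸} {t : ℝ}
    (ha : HasDerivAt a (a' t) t) (ha' : HasDerivAt a' a'' t) (hu : IsUnit (a t))
    (hw : HasDerivAt w w' t)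
    (hode : a'' + 2 • (a' t * w t) + a t * w' + a t * w t ^ 2 + a t * (r - m) = 0) :
    HasDerivAt (fun s => Ring.inverse (a s) * a' s + w s)
      (-(Ring.inverse (a t) * a' t + w t) ^ 2 - (Ring.inverse (a t) * a' t + w t) * w t
        + w t * (Ring.inverse (a t) * a' t + w t) - r + m) t := by
  have hN := ((ha.ringInverse hu).mul ha').add hw
  rwa [← riccati_identity_of_mul_eq_one (Ring.inverse_mul_cancel _ hu) hode]

end NormedAlgebra

/-- If `Φ_t = A(t)V(t)` satisfies the second-order linear matrix ODE
`A″ + 2A′𝔚 + A𝔚′ + A𝔚² + A(R − M) = 0` with `𝔚(t)` skew-symmetric, then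
`N(t) = A(t)⁻¹A′(t) + 𝔚(t)` satisfies the matrix Riccati equation
`N′ = −N² − N𝔚 − 𝔚ᵀN − R + M`. -/
theorem riccati_of_second_order_ode (n : ℕ)
    (A A' A'' 𝔚 𝔚' R M : ℝ → Matrix (Fin n) (Fin n) ℝ)
    (hA : ∀ t : ℝ, HasDerivAt A (A' t) t)
    (hA' : ∀ t : ℝ, HasDerivAt A' (A'' t) t)
    (hAinv : ∀ t : ℝ, IsUnit (A t))
    (h𝔚 : ∀ t : ℝ, HasDerivAt 𝔚 (𝔚' t) t)
    (h𝔚skew : ∀ t : ℝ, (𝔚 t)ᵀ = -(𝔚 t))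
    (hODE : ∀ t : ℝ,
      A'' t + 2 • (A' t * 𝔚 t) + A t * 𝔚' t + A t * (𝔚 t) ^ 2
        + A t * (R t - M t) = 0) :
    ∀ t : ℝ,
      HasDerivAt (fun s => (A s)⁻¹ * A' s + 𝔚 s)
        (-((A t)⁻¹ * A' t + 𝔚 t) ^ 2 - ((A t)⁻¹ * A' t + 𝔚 t) * 𝔚 t
          - (𝔚 t)ᵀ * ((A t)⁻¹ * A' t + 𝔚 t) - R t + M t) t := by
  intro t
  -- The entrywise sup norm is not submultiplicative. The operator norm is, and it induces the
  -- same topology, so the derivatives can be read in that normed algebra.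
  let _ : NormedRing (Matrix (Fin n) (Fin n) ℝ) := Matrix.linftyOpNormedRing
  let _ : NormedAlgebra ℝ (Matrix (Fin n) (Fin n) ℝ) := Matrix.linftyOpNormedAlgebra
  have _ : @CompleteSpace (Matrix (Fin n) (Fin n) ℝ) Matrix.linftyOpNormedRing.toUniformSpace := by
    exact (inferInstance : CompleteSpace (Matrix (Fin n) (Fin n) ℝ))
  simp only [nonsing_inv_eq_ringInverse, h𝔚skew, neg_mul, sub_neg_eq_add]
  exact (hA t).riccati_of_second_order (hA' t) (hAinv t) (h𝔚 t) (hODE t)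
end

section
/- Let n, k be natural numbers with k ≤ n, and let N, R, M : ℝ → Matrix (Fin n) (Fin n) ℝ be in block form as N(t) = fromBlocks 𝒩₀₀(t) 𝒩₀₁(t) 𝒩₁₀(t) 𝒩₁₁(t) (and similarly for R, M), with (1,1)-blocks of size k×k, and let W : ℝ → Matrix (Fin (n−k)) (Fin k) ℝ with 𝔚(t) = fromBlocks 0 W(t) (−W(t)ᵀ) 0. Suppose N is differentiable, satisfies N′(t) = −N(t)² − N(t)·𝔚(t) − 𝔚(t)ᵀ·N(t) − R(t) + M(t), and that the bottom-left block satisfies 𝒩₁₀(t) = W(t)ᵀ for every t. Then (d/dt) trace(𝒩₁₁(t)) = −trace(𝒩₁₁(t)²) − 2·trace(𝒩₁₀(t)·𝒩₀₁(t)) − trace(𝒩₁₀(t)·𝒩₁₀(t)ᵀ) − trace(ℛ₁₁(t)) + trace(ℳ₁₁(t)) for every t. -/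
open Matrix

attribute [local instance] Matrix.normedAddCommGroup Matrix.normedSpace

/-!
The trace of the bottom-right block is a sum of entries, so it
commutes with `d/dt`. In the bottom-right block of the Riccati right-hand side the two rotation
terms are `-𝒩₁₀ W - Wᵀ 𝒩₀₁`, which the constraint `𝒩₁₀ = Wᵀ` turns into
`-𝒩₁₀ 𝒩₁₀ᵀ - 𝒩₁₀ 𝒩₀₁`; the latter doubles the `𝒩₁₀ 𝒩₀₁` contribution of `-N²`.
-/

theorem HasDerivAt.trace_toBlocks₂₂ {𝕜 m o : Type*} [NontriviallyNormedField 𝕜]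
    [Fintype m] [Fintype o] {N : 𝕜 → Matrix (m ⊕ o) (m ⊕ o) 𝕜}
    {N' : Matrix (m ⊕ o) (m ⊕ o) 𝕜} {t : 𝕜} (h : HasDerivAt N N' t) :
    HasDerivAt (fun s => trace (N s).toBlocks₂₂) (trace N'.toBlocks₂₂) t :=
  HasDerivAt.fun_sum fun i _ => hasDerivAt_pi.1 (hasDerivAt_pi.1 h (.inr i)) (.inr i)

theorem trace_toBlocks₂₂_sub_add {m o α : Type*} [Fintype o] [AddCommGroup α]
    (A B C : Matrix (m ⊕ o) (m ⊕ o) α) :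
    trace (A - B + C).toBlocks₂₂ =
      trace A.toBlocks₂₂ - trace B.toBlocks₂₂ + trace C.toBlocks₂₂ := by
  simp [trace, toBlocks₂₂, Finset.sum_add_distrib]

theorem trace_toBlocks₂₂_neg_sq_sub_mul_skew {m o α : Type*} [Fintype m] [Fintype o]
    [DecidableEq m] [DecidableEq o] [Ring α]
    (A₀₀ : Matrix m m α) (A₀₁ W : Matrix m o α) (A₁₀ : Matrix o m α) (A₁₁ : Matrix o o α)
    (hW : A₁₀ = Wᵀ) :
    trace (-fromBlocks A₀₀ A₀₁ A₁₀ A₁₁ ^ 2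
        - fromBlocks A₀₀ A₀₁ A₁₀ A₁₁ * fromBlocks 0 W (-Wᵀ) 0
        - (fromBlocks 0 W (-Wᵀ) 0)ᵀ * fromBlocks A₀₀ A₀₁ A₁₀ A₁₁).toBlocks₂₂ =
      -trace (A₁₁ ^ 2) - 2 * trace (A₁₀ * A₀₁) - trace (A₁₀ * A₁₀ᵀ) := by
  subst hW
  simp only [pow_two, fromBlocks_multiply, fromBlocks_transpose, transpose_neg, transpose_transpose,
    transpose_zero, Matrix.mul_zero, Matrix.zero_mul, Matrix.mul_neg, Matrix.neg_mul, add_zero,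
    zero_add, sub_eq_add_neg, fromBlocks_neg, fromBlocks_add, toBlocks_fromBlocks₂₂, trace_add,
    trace_neg, two_mul]
  abel

theorem riccati_block_trace_general (n k : ℕ)
    (N00 R00 M00 : ℝ → Matrix (Fin (n - k)) (Fin (n - k)) ℝ)
    (N01 R01 M01 W : ℝ → Matrix (Fin (n - k)) (Fin k) ℝ)
    (N10 R10 M10 : ℝ → Matrix (Fin k) (Fin (n - k)) ℝ)
    (N11 R11 M11 : ℝ → Matrix (Fin k) (Fin k) ℝ)
    (N R M 𝔚 : ℝ → Matrix (Fin (n - k) ⊕ Fin k) (Fin (n - k) ⊕ Fin k) ℝ)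
    (hN : ∀ t, N t = fromBlocks (N00 t) (N01 t) (N10 t) (N11 t))
    (hR : ∀ t, R t = fromBlocks (R00 t) (R01 t) (R10 t) (R11 t))
    (hM : ∀ t, M t = fromBlocks (M00 t) (M01 t) (M10 t) (M11 t))
    (h𝔚 : ∀ t, 𝔚 t = fromBlocks 0 (W t) (-(W t)ᵀ) 0)
    (hNdiff : ∀ t : ℝ,
      HasDerivAt N
        (-(N t) ^ 2 - N t * 𝔚 t - (𝔚 t)ᵀ * N t - R t + M t) t)
    (hN10W : ∀ t, N10 t = (W t)ᵀ) :
    ∀ t : ℝ,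
      HasDerivAt (fun s => trace (N11 s))
        (-trace ((N11 t) ^ 2) - 2 * trace (N10 t * N01 t)
          - trace (N10 t * (N10 t)ᵀ) - trace (R11 t) + trace (M11 t)) t := by
  intro t
  have hblock : (fun s => trace (N11 s)) = fun s => trace (N s).toBlocks₂₂ := by
    funext s
    rw [hN, toBlocks_fromBlocks₂₂]
  rw [hblock]
  refine (hNdiff t).trace_toBlocks₂₂.congr_deriv ?_
  rw [trace_toBlocks₂₂_sub_add, hN t, hR t, hM t, h𝔚 t, toBlocks_fromBlocks₂₂,
    toBlocks_fromBlocks₂₂, trace_toBlocks₂₂_neg_sq_sub_mul_skew _ _ _ _ _ (hN10W t)]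

/-- Taking the trace of the bottom-right block of the matrix Riccati equation
`N′ = −N² − N𝔚 − 𝔚ᵀN − R + M` with `𝔚 = fromBlocks 0 W (−Wᵀ) 0` and
`𝒩₁₀ = Wᵀ` gives the evolution equation
`(tr 𝒩₁₁)′ = −tr(𝒩₁₁²) − 2 tr(𝒩₁₀𝒩₀₁) − tr(𝒩₁₀𝒩₁₀ᵀ) − tr ℛ₁₁ + tr ℳ₁₁`. -/
theorem riccati_block_trace (n k : ℕ) (hkn : k ≤ n)
    (N00 R00 M00 : ℝ → Matrix (Fin (n - k)) (Fin (n - k)) ℝ)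
    (N01 R01 M01 W : ℝ → Matrix (Fin (n - k)) (Fin k) ℝ)
    (N10 R10 M10 : ℝ → Matrix (Fin k) (Fin (n - k)) ℝ)
    (N11 R11 M11 : ℝ → Matrix (Fin k) (Fin k) ℝ)
    (N R M 𝔚 : ℝ → Matrix (Fin (n - k) ⊕ Fin k) (Fin (n - k) ⊕ Fin k) ℝ)
    (hN : ∀ t, N t = fromBlocks (N00 t) (N01 t) (N10 t) (N11 t))
    (hR : ∀ t, R t = fromBlocks (R00 t) (R01 t) (R10 t) (R11 t))
    (hM : ∀ t, M t = fromBlocks (M00 t) (M01 t) (M10 t) (M11 t))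
    (h𝔚 : ∀ t, 𝔚 t = fromBlocks 0 (W t) (-(W t)ᵀ) 0)
    (hNdiff : ∀ t : ℝ,
      HasDerivAt N
        (-(N t) ^ 2 - N t * 𝔚 t - (𝔚 t)ᵀ * N t - R t + M t) t)
    (hN10W : ∀ t, N10 t = (W t)ᵀ) :
    ∀ t : ℝ,
      HasDerivAt (fun s => trace (N11 s))
        (-trace ((N11 t) ^ 2) - 2 * trace (N10 t * N01 t)
          - trace (N10 t * (N10 t)ᵀ) - trace (R11 t) + trace (M11 t)) t :=
  riccati_block_trace_general n k N00 R00 M00 N01 R01 M01 W N10 R10 M10 N11 R11 M11 N R M 𝔚 hN hR hM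
    h𝔚 hNdiff hN10W
end

section
/- Let n ≥ 1, let U₁, U₂ : ℝⁿ → ℝ be smooth, let K ∈ ℝ, and let ρ : ℝ × ℝⁿ → ℝ be smooth with ρ(t, x) > 0 for all (t, x), satisfying the equation ∂ₜρ(t,x) = Δρ(t,x) + ⟨∇U₁(x), ∇ρ(t,x)⟩ + U₂(x)·ρ(t,x) + K·ρ(t,x)·log ρ(t,x) for all (t,x), where ∇ and Δ denote the gradient and the Laplacian (trace of the spatial Hessian) in the space variable. Define f(t,x) = −2·log ρ(t,x) − U₁(x) and V(x) = ΔU₁(x) + K·U₁(x) + ½|∇U₁(x)|² − 2U₂(x). Then ∂ₜf(t,x) + ½|∇f(t,x)|² = Δf(t,x) + V(x) + K·f(t,x) for all (t,x). -/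
open scoped RealInnerProductSpace

/-- The Laplacian of a function on Euclidean space: the trace of the Hessian,
computed as the sum of repeated directional derivatives along the standard
orthonormal basis. -/
noncomputable def laplacian {n : ℕ} (f : EuclideanSpace ℝ (Fin n) → ℝ)
    (x : EuclideanSpace ℝ (Fin n)) : ℝ :=
  ∑ i : Fin n,
    fderiv ℝ (fun y => fderiv ℝ f y (EuclideanSpace.single i 1)) x
      (EuclideanSpace.single i 1)

variable {n : ℕ}


lemma inner_gradient' (f : EuclideanSpace ℝ (Fin n) → ℝ) (x v : EuclideanSpace ℝ (Fin n)) :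
    ⟪gradient f x, v⟫ = fderiv ℝ f x v := by
  simp [gradient, InnerProductSpace.toDual_symm_apply]

lemma fderiv_h (f U₁ : EuclideanSpace ℝ (Fin n) → ℝ) (hf : ContDiff ℝ (⊤ : ℕ∞) f)
    (hU₁ : ContDiff ℝ (⊤ : ℕ∞) U₁) (hfpos : ∀ y, 0 < f y) (y : EuclideanSpace ℝ (Fin n)) :
    fderiv ℝ (fun z => -2 * Real.log (f z) - U₁ z) y
      = (-2 * (f y)⁻¹) • fderiv ℝ f y - fderiv ℝ U₁ y := by
  have hfd : HasFDerivAt f (fderiv ℝ f y) y := (hf.differentiable (by simp) y).hasFDerivAt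
  have hlog := hfd.log (hfpos y).ne'
  have h1 := (hlog.const_mul (-2 : ℝ)).sub (hU₁.differentiable (by simp) y).hasFDerivAt
  rw [show (fun z => -2 * Real.log (f z) - U₁ z) = (fun y => -2 * Real.log (f y)) - U₁ from rfl,
    h1.fderiv, smul_smul]

lemma grad_h (f U₁ : EuclideanSpace ℝ (Fin n) → ℝ) (hf : ContDiff ℝ (⊤ : ℕ∞) f)
    (hU₁ : ContDiff ℝ (⊤ : ℕ∞) U₁) (hfpos : ∀ y, 0 < f y) (x : EuclideanSpace ℝ (Fin n)) :
    gradient (fun z => -2 * Real.log (f z) - U₁ z) x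
      = (-2 * (f x)⁻¹) • gradient f x - gradient U₁ x := by
  simp only [gradient, fderiv_h f U₁ hf hU₁ hfpos x, map_sub, map_smul]

lemma contDiff_partial (f : EuclideanSpace ℝ (Fin n) → ℝ) (hf : ContDiff ℝ (⊤ : ℕ∞) f)
    (v : EuclideanSpace ℝ (Fin n)) :
    ContDiff ℝ (⊤ : ℕ∞) (fun y => fderiv ℝ f y v) :=
  (hf.fderiv_right (by simp)).clm_apply contDiff_const

lemma lap_h (f U₁ : EuclideanSpace ℝ (Fin n) → ℝ) (hf : ContDiff ℝ (⊤ : ℕ∞) f)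
    (hU₁ : ContDiff ℝ (⊤ : ℕ∞) U₁) (hfpos : ∀ y, 0 < f y) (x : EuclideanSpace ℝ (Fin n)) :
    laplacian (fun z => -2 * Real.log (f z) - U₁ z) x
      = -2 * (f x)⁻¹ * laplacian f x + 2 * ((f x)⁻¹) ^ 2 * ‖gradient f x‖ ^ 2
        - laplacian U₁ x := by
  have key : ∀ i : Fin n,
      fderiv ℝ (fun y => fderiv ℝ (fun z => -2 * Real.log (f z) - U₁ z) y
          (EuclideanSpace.single i 1)) x (EuclideanSpace.single i 1)
      = -2 * (f x)⁻¹ *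
          fderiv ℝ (fun y => fderiv ℝ f y (EuclideanSpace.single i 1)) x
            (EuclideanSpace.single i 1)
        + 2 * ((f x)⁻¹) ^ 2 * (fderiv ℝ f x (EuclideanSpace.single i 1)) ^ 2
        - fderiv ℝ (fun y => fderiv ℝ U₁ y (EuclideanSpace.single i 1)) x
            (EuclideanSpace.single i 1) := by
    intro i
    set e := EuclideanSpace.single (𝕜 := ℝ) i (1 : ℝ)
    set p := fun y => fderiv ℝ f y e with hp_def
    set q := fun y => fderiv ℝ U₁ y e with hq_def
    have hcongr : (fun y => fderiv ℝ (fun z => -2 * Real.log (f z) - U₁ z) y e)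
        = fun y => -2 * ((f y)⁻¹ * p y) - q y := by
      funext y
      rw [fderiv_h f U₁ hf hU₁ hfpos y]
      simp [mul_assoc]
      rfl
    rw [hcongr]
    have hp : ContDiff ℝ (⊤ : ℕ∞) p := contDiff_partial f hf e
    have hq : ContDiff ℝ (⊤ : ℕ∞) q := contDiff_partial U₁ hU₁ e
    have hfd : HasFDerivAt f (fderiv ℝ f x) x := (hf.differentiable (by simp) x).hasFDerivAt
    have hinv : HasFDerivAt (fun y => (f y)⁻¹) ((-(f x ^ 2)⁻¹) • fderiv ℝ f x) x :=
      (hasDerivAt_inv (hfpos x).ne').comp_hasFDerivAt x hfd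
    have hpd : HasFDerivAt p (fderiv ℝ p x) x := (hp.differentiable (by simp) x).hasFDerivAt
    have hqd : HasFDerivAt q (fderiv ℝ q x) x := (hq.differentiable (by simp) x).hasFDerivAt
    have hmul := hinv.mul hpd
    have htot := (hmul.const_mul (-2 : ℝ)).sub hqd
    rw [show (fun y => -2 * ((f y)⁻¹ * p y) - q y)
      = (fun y => -2 * ((fun y => (f y)⁻¹) * p) y) - q from rfl, htot.fderiv]
    have hpe : fderiv ℝ f x e = p x := rfl
    simp only [ContinuousLinearMap.coe_sub', Pi.sub_apply, ContinuousLinearMap.coe_smul',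
      Pi.smul_apply, ContinuousLinearMap.add_apply, ContinuousLinearMap.coe_smul',
      smul_eq_mul, hpe]
    ring
  simp only [laplacian, key, Finset.sum_add_distrib, Finset.sum_sub_distrib,
    ← Finset.mul_sum]
  have hsum : ∑ i : Fin n, (fderiv ℝ f x (EuclideanSpace.single i 1)) ^ 2
      = ‖gradient f x‖ ^ 2 := by
    have : ∀ i : Fin n, fderiv ℝ f x (EuclideanSpace.single i 1) = gradient f x i := by
      intro i
      rw [← inner_gradient', EuclideanSpace.inner_single_right]
      simp
    simp only [this]
    rw [EuclideanSpace.norm_eq, Real.sq_sqrt (by positivity)]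
    simp [sq_abs]
  rw [hsum]

/-- The logarithmic transformation: if `ρ > 0` solves
`∂ₜρ = Δρ + ⟨∇U₁, ∇ρ⟩ + U₂·ρ + K·ρ·log ρ`, then `f = −2 log ρ − U₁` solves
`∂ₜf + ½|∇f|² = Δf + V + K·f` with
`V = ΔU₁ + K·U₁ + ½|∇U₁|² − 2U₂`. -/
theorem log_transform_diffusion (n : ℕ) (hn : 1 ≤ n)
    (U₁ U₂ : EuclideanSpace ℝ (Fin n) → ℝ)
    (hU₁ : ContDiff ℝ (⊤ : ℕ∞) U₁) (hU₂ : ContDiff ℝ (⊤ : ℕ∞) U₂) (K : ℝ)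
    (ρ : ℝ × EuclideanSpace ℝ (Fin n) → ℝ) (hρ : ContDiff ℝ (⊤ : ℕ∞) ρ)
    (hρpos : ∀ p, 0 < ρ p)
    (heq : ∀ (t : ℝ) (x : EuclideanSpace ℝ (Fin n)),
      deriv (fun s => ρ (s, x)) t
        = laplacian (fun y => ρ (t, y)) x
          + ⟪gradient U₁ x, gradient (fun y => ρ (t, y)) x⟫
          + U₂ x * ρ (t, x) + K * ρ (t, x) * Real.log (ρ (t, x))) :
    ∀ (t : ℝ) (x : EuclideanSpace ℝ (Fin n)),
      deriv (fun s => -2 * Real.log (ρ (s, x)) - U₁ x) t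
        + (1 / 2) * ‖gradient (fun y => -2 * Real.log (ρ (t, y)) - U₁ y) x‖ ^ 2
      = laplacian (fun y => -2 * Real.log (ρ (t, y)) - U₁ y) x
        + (laplacian U₁ x + K * U₁ x + (1 / 2) * ‖gradient U₁ x‖ ^ 2
            - 2 * U₂ x)
        + K * (-2 * Real.log (ρ (t, x)) - U₁ x) := by
  intro t x
  have hρt : ContDiff ℝ (⊤ : ℕ∞) (fun y => ρ (t, y)) :=
    hρ.comp (contDiff_const.prodMk contDiff_id)
  have hρs : ContDiff ℝ (⊤ : ℕ∞) (fun s => ρ (s, x)) :=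
    hρ.comp (contDiff_id.prodMk contDiff_const)
  have hρtpos : ∀ y, 0 < ρ (t, y) := fun y => hρpos _
  set r := ρ (t, x) with hr
  have hr0 : r ≠ 0 := (hρpos _).ne'
  set a := deriv (fun s => ρ (s, x)) t with ha
  -- time derivative
  have hd : HasDerivAt (fun s => ρ (s, x)) a t :=
    ((hρs.differentiable (by simp)) t).hasDerivAt
  have htime : deriv (fun s => -2 * Real.log (ρ (s, x)) - U₁ x) t = -2 * (a / r) := by
    exact (((hd.log hr0).const_mul (-2 : ℝ)).sub_const (U₁ x)).deriv
  -- gradient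
  set g := gradient (fun y => ρ (t, y)) x with hg
  set G := gradient U₁ x with hG
  have hgrad := grad_h (fun y => ρ (t, y)) U₁ hρt hU₁ hρtpos x
  have hlap := lap_h (fun y => ρ (t, y)) U₁ hρt hU₁ hρtpos x
  have hnorm : ‖(-2 * r⁻¹) • g - G‖ ^ 2
      = (-2 * r⁻¹) ^ 2 * ‖g‖ ^ 2 - 2 * (-2 * r⁻¹) * ⟪g, G⟫ + ‖G‖ ^ 2 := by
    rw [norm_sub_sq_real, real_inner_smul_left, norm_smul, Real.norm_eq_abs]
    rw [mul_pow, sq_abs]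
    ring
  rw [htime, hgrad, hlap, hnorm]
  have he := heq t x
  rw [← ha, ← hr, ← hg, ← hG] at he
  rw [he, real_inner_comm g G]
  simp only [← hr, ← hg]
  field_simp
  ring
end

section
/- Let n ≥ 1, let V : ℝⁿ → ℝ be smooth, let K ∈ ℝ, and let f : ℝ × ℝⁿ → ℝ be smooth satisfying ∂ₜf + ½|∇f|² = Δf + V + K·f everywhere, where ∇ and Δ denote the spatial gradient and Laplacian. Let γ : ℝ → ℝⁿ be differentiable with γ′(t) = ∇f(t, γ(t)) for all t. Then for every t, (d/dt)[(∂ₜf)(t, γ(t))] = Δ(∂ₜf)(t, γ(t)) + K·(∂ₜf)(t, γ(t)), where Δ(∂ₜf) denotes the spatial Laplacian of the function x ↦ ∂ₜf(t, x). -/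
open scoped RealInnerProductSpace

section helpers

variable {n : ℕ}

private lemma euclid_single_sum (u : EuclideanSpace ℝ (Fin n)) :
    ∑ i : Fin n, u i • EuclideanSpace.single i (1 : ℝ) = u := by
  ext j
  rw [WithLp.ofLp_sum, Finset.sum_apply]
  simp [EuclideanSpace.single_apply]

private lemma euclid_norm_sq (u : EuclideanSpace ℝ (Fin n)) :
    ‖u‖ ^ 2 = ∑ i : Fin n, u i ^ 2 := by
  rw [EuclideanSpace.norm_eq, Real.sq_sqrt (by positivity)]
  exact Finset.sum_congr rfl fun i _ => by rw [Real.norm_eq_abs, sq_abs]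

private lemma curve_deriv {Y : Type*} [NormedAddCommGroup Y] [NormedSpace ℝ Y]
    {g : ℝ × EuclideanSpace ℝ (Fin n) → Y} {σ : ℝ → ℝ × EuclideanSpace ℝ (Fin n)}
    {σ' : ℝ × EuclideanSpace ℝ (Fin n)} {t : ℝ}
    (hg : DifferentiableAt ℝ g (σ t)) (hσ : HasDerivAt σ σ' t) :
    HasDerivAt (fun s => g (σ s)) (fderiv ℝ g (σ t) σ') t :=
  hg.hasFDerivAt.comp_hasDerivAt t hσ

private lemma hasDerivAt_time {Y : Type*} [NormedAddCommGroup Y] [NormedSpace ℝ Y]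
    {g : ℝ × EuclideanSpace ℝ (Fin n) → Y} (hg : Differentiable ℝ g) (t : ℝ)
    (x : EuclideanSpace ℝ (Fin n)) :
    HasDerivAt (fun s => g (s, x)) (fderiv ℝ g (t, x) (1, 0)) t :=
  curve_deriv (hg _) (HasDerivAt.prodMk (hasDerivAt_id t) (hasDerivAt_const t x))

private lemma deriv_time {g : ℝ × EuclideanSpace ℝ (Fin n) → ℝ} (hg : Differentiable ℝ g)
    (t : ℝ) (x : EuclideanSpace ℝ (Fin n)) :
    deriv (fun s => g (s, x)) t = fderiv ℝ g (t, x) (1, 0) :=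
  (hasDerivAt_time hg t x).deriv

private lemma hasFDerivAt_space {Y : Type*} [NormedAddCommGroup Y] [NormedSpace ℝ Y]
    {g : ℝ × EuclideanSpace ℝ (Fin n) → Y} (hg : Differentiable ℝ g) (t : ℝ)
    (x : EuclideanSpace ℝ (Fin n)) :
    HasFDerivAt (fun y => g (t, y))
      ((fderiv ℝ g (t, x)).comp
        ((0 : EuclideanSpace ℝ (Fin n) →L[ℝ] ℝ).prod (ContinuousLinearMap.id ℝ _))) x :=
  (hg _).hasFDerivAt.comp x (HasFDerivAt.prodMk (hasFDerivAt_const t x) (hasFDerivAt_id x))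

private lemma fderiv_space {Y : Type*} [NormedAddCommGroup Y] [NormedSpace ℝ Y]
    {g : ℝ × EuclideanSpace ℝ (Fin n) → Y} (hg : Differentiable ℝ g) (t : ℝ)
    (x : EuclideanSpace ℝ (Fin n)) (v : EuclideanSpace ℝ (Fin n)) :
    fderiv ℝ (fun y => g (t, y)) x v = fderiv ℝ g (t, x) (0, v) := by
  rw [(hasFDerivAt_space hg t x).fderiv]
  simp

private lemma grad_coord {g : ℝ × EuclideanSpace ℝ (Fin n) → ℝ} (hg : Differentiable ℝ g)
    (t : ℝ) (x : EuclideanSpace ℝ (Fin n)) (i : Fin n) :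
    gradient (fun y => g (t, y)) x i
      = fderiv ℝ g (t, x) (0, EuclideanSpace.single i 1) := by
  have h1 : ⟪gradient (fun y => g (t, y)) x, EuclideanSpace.single i (1 : ℝ)⟫
      = fderiv ℝ (fun y => g (t, y)) x (EuclideanSpace.single i 1) :=
    InnerProductSpace.toDual_symm_apply
  rw [EuclideanSpace.inner_single_right, fderiv_space hg t x] at h1
  simpa using h1

private lemma hasFDerivAt_clm_apply_const {X Y Z : Type*} [NormedAddCommGroup X]
    [NormedSpace ℝ X] [NormedAddCommGroup Y] [NormedSpace ℝ Y] [NormedAddCommGroup Z]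
    [NormedSpace ℝ Z] {c : X → Y →L[ℝ] Z} {x : X} (hc : DifferentiableAt ℝ c x) (v : Y) :
    HasFDerivAt (fun p => c p v) ((fderiv ℝ c x).flip v) x := by
  have h := hc.hasFDerivAt.clm_apply (hasFDerivAt_const v x)
  simpa using h

end helpers

set_option maxHeartbeats 1000000 in
/-- Along an integral curve `γ` of the gradient of a solution `f` of
`∂ₜf + ½|∇f|² = Δf + V + K·f`, the time derivative `ḟ = ∂ₜf` satisfies
`(d/dt) ḟ(t, γ(t)) = Δḟ + K·ḟ`. -/
theorem dt_deriv_along_gradient_flow (n : ℕ) (hn : 1 ≤ n)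
    (V : EuclideanSpace ℝ (Fin n) → ℝ) (hV : ContDiff ℝ (⊤ : ℕ∞) V) (K : ℝ)
    (f : ℝ × EuclideanSpace ℝ (Fin n) → ℝ) (hf : ContDiff ℝ (⊤ : ℕ∞) f)
    (heq : ∀ (t : ℝ) (x : EuclideanSpace ℝ (Fin n)),
      deriv (fun s => f (s, x)) t
        + (1 / 2) * ‖gradient (fun y => f (t, y)) x‖ ^ 2
      = laplacian (fun y => f (t, y)) x + V x + K * f (t, x))
    (γ : ℝ → EuclideanSpace ℝ (Fin n))
    (hγ : ∀ t : ℝ, HasDerivAt γ (gradient (fun y => f (t, y)) (γ t)) t) :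
    ∀ t : ℝ,
      HasDerivAt (fun s => deriv (fun τ => f (τ, γ s)) s)
        (laplacian (fun y => deriv (fun τ => f (τ, y)) t) (γ t)
          + K * deriv (fun τ => f (τ, γ t)) t) t := by
  have df : Differentiable ℝ f := hf.differentiable (by simp)
  have hf1 : ContDiff ℝ (⊤ : ℕ∞) (fderiv ℝ f) := hf.fderiv_right (by simp)
  have df1 : Differentiable ℝ (fderiv ℝ f) := hf1.differentiable (by simp)
  have hf2 : ContDiff ℝ (⊤ : ℕ∞) (fderiv ℝ (fderiv ℝ f)) := hf1.fderiv_right (by simp)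
  have df2 : Differentiable ℝ (fderiv ℝ (fderiv ℝ f)) := hf2.differentiable (by simp)
  have hA : ∀ v : ℝ × EuclideanSpace ℝ (Fin n),
      ContDiff ℝ (⊤ : ℕ∞) (fun p => fderiv ℝ f p v) := fun v => hf1.clm_apply contDiff_const
  have hB1 : ∀ v : ℝ × EuclideanSpace ℝ (Fin n),
      ContDiff ℝ (⊤ : ℕ∞) (fun p => fderiv ℝ (fderiv ℝ f) p v) := fun v =>
    hf2.clm_apply contDiff_const
  have hB : ∀ v w : ℝ × EuclideanSpace ℝ (Fin n),
      ContDiff ℝ (⊤ : ℕ∞) (fun p => fderiv ℝ (fderiv ℝ f) p v w) := fun v w =>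
    (hB1 v).clm_apply contDiff_const
  -- value of the derivative of `p ↦ D f p v`
  have hval2 : ∀ (p a v : ℝ × EuclideanSpace ℝ (Fin n)),
      fderiv ℝ (fun p' => fderiv ℝ f p' v) p a = fderiv ℝ (fderiv ℝ f) p a v := by
    intro p a v
    rw [(hasFDerivAt_clm_apply_const (df1 p) v).fderiv]
    simp
  -- value of the derivative of `p ↦ D² f p v w`
  have hval3 : ∀ (p a v w : ℝ × EuclideanSpace ℝ (Fin n)),
      fderiv ℝ (fun p' => fderiv ℝ (fderiv ℝ f) p' v w) p a
        = fderiv ℝ (fderiv ℝ (fderiv ℝ f)) p a v w := by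
    intro p a v w
    have h1 : HasFDerivAt (fun p' => fderiv ℝ (fderiv ℝ f) p' v)
        ((fderiv ℝ (fderiv ℝ (fderiv ℝ f)) p).flip v) p :=
      hasFDerivAt_clm_apply_const (df2 p) v
    have h2 : HasFDerivAt (fun p' => fderiv ℝ (fderiv ℝ f) p' v w)
        (((fderiv ℝ (fderiv ℝ (fderiv ℝ f)) p).flip v).flip w) p := by
      have h3 := hasFDerivAt_clm_apply_const
        (c := fun p' => fderiv ℝ (fderiv ℝ f) p' v) ((hB1 v).differentiable (by simp) p) w
      rwa [h1.fderiv] at h3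
    rw [h2.fderiv]
    simp
  -- symmetry of the second derivative
  have hsym2 : ∀ (p a b : ℝ × EuclideanSpace ℝ (Fin n)),
      fderiv ℝ (fderiv ℝ f) p a b = fderiv ℝ (fderiv ℝ f) p b a := fun p a b =>
    second_derivative_symmetric (fun y => (df y).hasFDerivAt) (df1 p).hasFDerivAt a b
  -- symmetry of the third derivative in the first two arguments
  have hsymT1 : ∀ (p a b : ℝ × EuclideanSpace ℝ (Fin n)),
      fderiv ℝ (fderiv ℝ (fderiv ℝ f)) p a b = fderiv ℝ (fderiv ℝ (fderiv ℝ f)) p b a :=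
    fun p a b =>
    second_derivative_symmetric (fun y => (df1 y).hasFDerivAt) (df2 p).hasFDerivAt a b
  -- symmetry of the third derivative in the last two arguments
  have hsymT2 : ∀ (p a b c : ℝ × EuclideanSpace ℝ (Fin n)),
      fderiv ℝ (fderiv ℝ (fderiv ℝ f)) p a b c
        = fderiv ℝ (fderiv ℝ (fderiv ℝ f)) p a c b := by
    intro p a b c
    have e1 : (fun p' => fderiv ℝ (fderiv ℝ f) p' b c)
        = (fun p' => fderiv ℝ (fderiv ℝ f) p' c b) := funext fun p' => hsym2 p' b c
    have h1 := hval3 p a b c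
    have h2 := hval3 p a c b
    rw [← h1, e1, h2]
  -- the PDE in canonical form
  have hPDE : ∀ p : ℝ × EuclideanSpace ℝ (Fin n),
      fderiv ℝ f p ((1:ℝ), (0 : EuclideanSpace ℝ (Fin n)))
        + (1/2 : ℝ) * ∑ i : Fin n, fderiv ℝ f p ((0:ℝ), EuclideanSpace.single i 1) ^ 2
      = (∑ i : Fin n, fderiv ℝ (fderiv ℝ f) p ((0:ℝ), EuclideanSpace.single i 1)
            ((0:ℝ), EuclideanSpace.single i 1)) + V p.2 + K * f p := by
    rintro ⟨s, y⟩
    have h0 := heq s y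
    rw [deriv_time df s y] at h0
    have hnorm : ‖gradient (fun y' => f (s, y')) y‖ ^ 2
        = ∑ i : Fin n, fderiv ℝ f (s, y) ((0:ℝ), EuclideanSpace.single i 1) ^ 2 := by
      rw [euclid_norm_sq]
      exact Finset.sum_congr rfl fun i _ => by rw [grad_coord df s y i]
    have hlap : laplacian (fun y' => f (s, y')) y
        = ∑ i : Fin n, fderiv ℝ (fderiv ℝ f) (s, y) ((0:ℝ), EuclideanSpace.single i 1)
            ((0:ℝ), EuclideanSpace.single i 1) := by
      unfold laplacian
      refine Finset.sum_congr rfl fun i _ => ?_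
      have hinner : (fun y' => fderiv ℝ (fun y'' => f (s, y'')) y' (EuclideanSpace.single i 1))
          = fun y' => fderiv ℝ f (s, y') ((0:ℝ), EuclideanSpace.single i 1) :=
        funext fun y' => fderiv_space df s y' _
      rw [hinner]
      have h2 : fderiv ℝ
          (fun y' => fderiv ℝ f (s, y') ((0:ℝ), EuclideanSpace.single i 1)) y
            (EuclideanSpace.single i 1)
          = fderiv ℝ (fun p => fderiv ℝ f p ((0:ℝ), EuclideanSpace.single i 1)) (s, y)
            ((0:ℝ), EuclideanSpace.single i 1) :=
        fderiv_space ((hA _).differentiable (by simp)) s y _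
      rw [h2, hval2]
    rw [hnorm, hlap] at h0
    exact h0
  -- fix t and set up notation
  intro t
  -- time-derivative facts along the constant-space slice at `γ t`
  have hasDt : ∀ v : ℝ × EuclideanSpace ℝ (Fin n),
      HasDerivAt (fun s => fderiv ℝ f (s, γ t) v)
        (fderiv ℝ (fderiv ℝ f) (t, γ t) (1, 0) v) t := by
    intro v
    have h := hasDerivAt_time (g := fun p => fderiv ℝ f p v)
      ((hA v).differentiable (by simp)) t (γ t)
    rwa [hval2] at h
  have hasDt2 : ∀ v w : ℝ × EuclideanSpace ℝ (Fin n),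
      HasDerivAt (fun s => fderiv ℝ (fderiv ℝ f) (s, γ t) v w)
        (fderiv ℝ (fderiv ℝ (fderiv ℝ f)) (t, γ t) (1, 0) v w) t := by
    intro v w
    have h := hasDerivAt_time (g := fun p => fderiv ℝ (fderiv ℝ f) p v w)
      ((hB v w).differentiable (by simp)) t (γ t)
    rwa [hval3] at h
  have hasDtf : HasDerivAt (fun s => f (s, γ t)) (fderiv ℝ f (t, γ t) (1, 0)) t :=
    hasDerivAt_time df t (γ t)
  -- differentiate the PDE in time at (t, γ t)
  have hLfun : (fun s => fderiv ℝ f (s, γ t) ((1:ℝ), (0 : EuclideanSpace ℝ (Fin n)))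
        + (1/2 : ℝ) * ∑ i : Fin n,
            fderiv ℝ f (s, γ t) ((0:ℝ), EuclideanSpace.single i 1) ^ 2)
      = (fun s => (∑ i : Fin n, fderiv ℝ (fderiv ℝ f) (s, γ t)
            ((0:ℝ), EuclideanSpace.single i 1) ((0:ℝ), EuclideanSpace.single i 1))
          + V (γ t) + K * f (s, γ t)) :=
    funext fun s => hPDE (s, γ t)
  have hL : HasDerivAt
      (fun s => fderiv ℝ f (s, γ t) ((1:ℝ), (0 : EuclideanSpace ℝ (Fin n)))
        + (1/2 : ℝ) * ∑ i : Fin n,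
            fderiv ℝ f (s, γ t) ((0:ℝ), EuclideanSpace.single i 1) ^ 2)
      (fderiv ℝ (fderiv ℝ f) (t, γ t) (1, 0) ((1:ℝ), (0 : EuclideanSpace ℝ (Fin n)))
        + (1/2 : ℝ) * ∑ i : Fin n,
            ((2:ℕ) : ℝ) * fderiv ℝ f (t, γ t) ((0:ℝ), EuclideanSpace.single i 1) ^ (2-1)
              * fderiv ℝ (fderiv ℝ f) (t, γ t) (1, 0) ((0:ℝ), EuclideanSpace.single i 1)) t := by
    exact (hasDt _).fun_add (HasDerivAt.const_mul _
      (HasDerivAt.fun_sum fun i _ => HasDerivAt.fun_pow (n := 2) (hasDt _)))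
  have hR : HasDerivAt
      (fun s => (∑ i : Fin n, fderiv ℝ (fderiv ℝ f) (s, γ t)
            ((0:ℝ), EuclideanSpace.single i 1) ((0:ℝ), EuclideanSpace.single i 1))
          + V (γ t) + K * f (s, γ t))
      ((∑ i : Fin n, fderiv ℝ (fderiv ℝ (fderiv ℝ f)) (t, γ t) (1, 0)
            ((0:ℝ), EuclideanSpace.single i 1) ((0:ℝ), EuclideanSpace.single i 1))
          + 0 + K * fderiv ℝ f (t, γ t) (1, 0)) t := by
    exact ((HasDerivAt.fun_sum fun i _ => hasDt2 _ _).fun_add (hasDerivAt_const t _)).fun_add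
      (HasDerivAt.const_mul K hasDtf)
  rw [hLfun] at hL
  have hkey := hL.unique hR
  have hhalf : (1/2 : ℝ) * ∑ i : Fin n,
        ((2:ℕ) : ℝ) * fderiv ℝ f (t, γ t) ((0:ℝ), EuclideanSpace.single i 1) ^ (2-1)
          * fderiv ℝ (fderiv ℝ f) (t, γ t) (1, 0) ((0:ℝ), EuclideanSpace.single i 1)
      = ∑ i : Fin n, fderiv ℝ f (t, γ t) ((0:ℝ), EuclideanSpace.single i 1)
          * fderiv ℝ (fderiv ℝ f) (t, γ t) (1, 0) ((0:ℝ), EuclideanSpace.single i 1) := by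
    rw [Finset.mul_sum]
    exact Finset.sum_congr rfl fun i _ => by push_cast; ring
  rw [hhalf] at hkey
  -- hkey : D²f(1,0)(1,0) + ∑ cᵢ D²f(1,0)(0,eᵢ) = ∑ D³f(1,0)(0,eᵢ)(0,eᵢ) + 0 + K Df(1,0)
  -- rewrite the goal
  have h0 : (fun s => deriv (fun τ => f (τ, γ s)) s)
      = fun s => fderiv ℝ f (s, γ s) ((1:ℝ), (0 : EuclideanSpace ℝ (Fin n))) :=
    funext fun s => deriv_time df s (γ s)
  have hKt : deriv (fun τ => f (τ, γ t)) t
      = fderiv ℝ f (t, γ t) ((1:ℝ), (0 : EuclideanSpace ℝ (Fin n))) := deriv_time df t (γ t)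
  have hlap2 : laplacian (fun y => deriv (fun τ => f (τ, y)) t) (γ t)
      = ∑ i : Fin n, fderiv ℝ (fderiv ℝ (fderiv ℝ f)) (t, γ t)
          ((0:ℝ), EuclideanSpace.single i 1) ((0:ℝ), EuclideanSpace.single i 1)
          ((1:ℝ), (0 : EuclideanSpace ℝ (Fin n))) := by
    have hfun : (fun y => deriv (fun τ => f (τ, y)) t)
        = fun y => fderiv ℝ f (t, y) ((1:ℝ), (0 : EuclideanSpace ℝ (Fin n))) :=
      funext fun y => deriv_time df t y
    rw [hfun]
    unfold laplacian
    refine Finset.sum_congr rfl fun i _ => ?_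
    have hinner : (fun y => fderiv ℝ
          (fun y' => fderiv ℝ f (t, y') ((1:ℝ), (0 : EuclideanSpace ℝ (Fin n)))) y
          (EuclideanSpace.single i 1))
        = fun y => fderiv ℝ (fderiv ℝ f) (t, y) ((0:ℝ), EuclideanSpace.single i 1)
            ((1:ℝ), (0 : EuclideanSpace ℝ (Fin n))) := by
      funext y
      have h1 : fderiv ℝ
            (fun y' => fderiv ℝ f (t, y') ((1:ℝ), (0 : EuclideanSpace ℝ (Fin n)))) y
            (EuclideanSpace.single i 1)
          = fderiv ℝ (fun p => fderiv ℝ f p ((1:ℝ), (0 : EuclideanSpace ℝ (Fin n)))) (t, y)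
            ((0:ℝ), EuclideanSpace.single i 1) :=
        fderiv_space ((hA _).differentiable (by simp)) t y _
      rw [h1, hval2]
    rw [hinner]
    have h2 : fderiv ℝ (fun y => fderiv ℝ (fderiv ℝ f) (t, y)
          ((0:ℝ), EuclideanSpace.single i 1) ((1:ℝ), (0 : EuclideanSpace ℝ (Fin n)))) (γ t)
          (EuclideanSpace.single i 1)
        = fderiv ℝ (fun p => fderiv ℝ (fderiv ℝ f) p
            ((0:ℝ), EuclideanSpace.single i 1) ((1:ℝ), (0 : EuclideanSpace ℝ (Fin n)))) (t, γ t)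
            ((0:ℝ), EuclideanSpace.single i 1) :=
      fderiv_space ((hB _ _).differentiable (by simp)) t (γ t) _
    rw [h2, hval3]
  rw [h0, hlap2, hKt]
  -- the main chain rule along the flow
  have hσ : HasDerivAt (fun s => ((s, γ s) : ℝ × EuclideanSpace ℝ (Fin n)))
      ((1:ℝ), gradient (fun y => f (t, y)) (γ t)) t :=
    HasDerivAt.prodMk (hasDerivAt_id t) (hγ t)
  have hmain : HasDerivAt
      (fun s => fderiv ℝ f (s, γ s) ((1:ℝ), (0 : EuclideanSpace ℝ (Fin n))))
      (fderiv ℝ (fderiv ℝ f) (t, γ t) ((1:ℝ), gradient (fun y => f (t, y)) (γ t))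
        ((1:ℝ), (0 : EuclideanSpace ℝ (Fin n)))) t := by
    have h := curve_deriv
      (g := fun p => fderiv ℝ f p ((1:ℝ), (0 : EuclideanSpace ℝ (Fin n))))
      ((hA _).differentiable (by simp) _) hσ
    rw [hval2] at h
    exact h
  -- identify the derivative value
  have hfinal : fderiv ℝ (fderiv ℝ f) (t, γ t) ((1:ℝ), gradient (fun y => f (t, y)) (γ t))
        ((1:ℝ), (0 : EuclideanSpace ℝ (Fin n)))
      = (∑ i : Fin n, fderiv ℝ (fderiv ℝ (fderiv ℝ f)) (t, γ t)
          ((0:ℝ), EuclideanSpace.single i 1) ((0:ℝ), EuclideanSpace.single i 1)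
          ((1:ℝ), (0 : EuclideanSpace ℝ (Fin n))))
        + K * fderiv ℝ f (t, γ t) ((1:ℝ), (0 : EuclideanSpace ℝ (Fin n))) := by
    have hsplit : ((1:ℝ), gradient (fun y => f (t, y)) (γ t))
        = ((1:ℝ), (0 : EuclideanSpace ℝ (Fin n)))
          + ((0:ℝ), gradient (fun y => f (t, y)) (γ t)) := by
      simp [Prod.ext_iff]
    have hGdecomp : ((0:ℝ), gradient (fun y => f (t, y)) (γ t))
        = ∑ i : Fin n, fderiv ℝ f (t, γ t) ((0:ℝ), EuclideanSpace.single i 1)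
            • (((0:ℝ), EuclideanSpace.single i 1) : ℝ × EuclideanSpace ℝ (Fin n)) := by
      have h1 : gradient (fun y => f (t, y)) (γ t)
          = ∑ i : Fin n, fderiv ℝ f (t, γ t) ((0:ℝ), EuclideanSpace.single i 1)
              • EuclideanSpace.single i (1:ℝ) := by
        conv_lhs => rw [← euclid_single_sum (gradient (fun y => f (t, y)) (γ t))]
        exact Finset.sum_congr rfl fun i _ => by rw [grad_coord df t (γ t) i]
      rw [h1]
      refine Prod.ext ?_ ?_
      · rw [Prod.fst_sum]
        simp
      · rw [Prod.snd_sum]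
        simp
    have hcross : fderiv ℝ (fderiv ℝ f) (t, γ t)
          ((0:ℝ), gradient (fun y => f (t, y)) (γ t))
          ((1:ℝ), (0 : EuclideanSpace ℝ (Fin n)))
        = ∑ i : Fin n, fderiv ℝ f (t, γ t) ((0:ℝ), EuclideanSpace.single i 1)
            * fderiv ℝ (fderiv ℝ f) (t, γ t) (1, 0) ((0:ℝ), EuclideanSpace.single i 1) := by
      rw [hGdecomp, map_sum, ContinuousLinearMap.sum_apply]
      refine Finset.sum_congr rfl fun i _ => ?_
      rw [map_smul, ContinuousLinearMap.smul_apply, smul_eq_mul]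
      congr 1
      exact hsym2 (t, γ t) ((0:ℝ), EuclideanSpace.single i 1)
        ((1:ℝ), (0 : EuclideanSpace ℝ (Fin n)))
    have hTsym : ∀ i : Fin n, fderiv ℝ (fderiv ℝ (fderiv ℝ f)) (t, γ t) (1, 0)
          ((0:ℝ), EuclideanSpace.single i 1) ((0:ℝ), EuclideanSpace.single i 1)
        = fderiv ℝ (fderiv ℝ (fderiv ℝ f)) (t, γ t)
          ((0:ℝ), EuclideanSpace.single i 1) ((0:ℝ), EuclideanSpace.single i 1)
          ((1:ℝ), (0 : EuclideanSpace ℝ (Fin n))) := by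
      intro i
      have step1 : fderiv ℝ (fderiv ℝ (fderiv ℝ f)) (t, γ t)
            ((1:ℝ), (0 : EuclideanSpace ℝ (Fin n))) ((0:ℝ), EuclideanSpace.single i 1)
            ((0:ℝ), EuclideanSpace.single i 1)
          = fderiv ℝ (fderiv ℝ (fderiv ℝ f)) (t, γ t)
            ((0:ℝ), EuclideanSpace.single i 1) ((1:ℝ), (0 : EuclideanSpace ℝ (Fin n)))
            ((0:ℝ), EuclideanSpace.single i 1) :=
        DFunLike.congr_fun (hsymT1 (t, γ t) ((1:ℝ), (0 : EuclideanSpace ℝ (Fin n)))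
          ((0:ℝ), EuclideanSpace.single i 1)) ((0:ℝ), EuclideanSpace.single i 1)
      exact step1.trans (hsymT2 (t, γ t) ((0:ℝ), EuclideanSpace.single i 1)
        ((1:ℝ), (0 : EuclideanSpace ℝ (Fin n))) ((0:ℝ), EuclideanSpace.single i 1))
    calc fderiv ℝ (fderiv ℝ f) (t, γ t) ((1:ℝ), gradient (fun y => f (t, y)) (γ t))
          ((1:ℝ), (0 : EuclideanSpace ℝ (Fin n)))
        = fderiv ℝ (fderiv ℝ f) (t, γ t) ((1:ℝ), (0 : EuclideanSpace ℝ (Fin n)))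
            ((1:ℝ), (0 : EuclideanSpace ℝ (Fin n)))
          + fderiv ℝ (fderiv ℝ f) (t, γ t)
            ((0:ℝ), gradient (fun y => f (t, y)) (γ t))
            ((1:ℝ), (0 : EuclideanSpace ℝ (Fin n))) := by
          rw [hsplit, map_add, ContinuousLinearMap.add_apply]
      _ = fderiv ℝ (fderiv ℝ f) (t, γ t) ((1:ℝ), (0 : EuclideanSpace ℝ (Fin n)))
            ((1:ℝ), (0 : EuclideanSpace ℝ (Fin n)))
          + ∑ i : Fin n, fderiv ℝ f (t, γ t) ((0:ℝ), EuclideanSpace.single i 1)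
            * fderiv ℝ (fderiv ℝ f) (t, γ t) (1, 0) ((0:ℝ), EuclideanSpace.single i 1) := by
          rw [hcross]
      _ = (∑ i : Fin n, fderiv ℝ (fderiv ℝ (fderiv ℝ f)) (t, γ t) (1, 0)
            ((0:ℝ), EuclideanSpace.single i 1) ((0:ℝ), EuclideanSpace.single i 1))
          + 0 + K * fderiv ℝ f (t, γ t) (1, 0) := hkey
      _ = (∑ i : Fin n, fderiv ℝ (fderiv ℝ (fderiv ℝ f)) (t, γ t)
            ((0:ℝ), EuclideanSpace.single i 1) ((0:ℝ), EuclideanSpace.single i 1)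
            ((1:ℝ), (0 : EuclideanSpace ℝ (Fin n))))
          + K * fderiv ℝ f (t, γ t) ((1:ℝ), (0 : EuclideanSpace ℝ (Fin n))) := by
          rw [add_zero]
          congr 1
          exact Finset.sum_congr rfl fun i _ => hTsym i
  rw [hfinal] at hmain
  exact hmain
end
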